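/- Let H be a Hopf algebra and B an H-Galois extension of the base field k, i.e. B is a left H-comodule algebra with coinvariants k and bijective Galois map Γ : B ⊗ B → H ⊗ B, Γ(x ⊗ y) = x₍₁₎ ⊗ x₍₂₎ y. Define the Miyashita–Ulbrich action x ▷ a = Γ⁻¹(x ⊗ 1)⁽¹⁾ a Γ⁻¹(x ⊗ 1)⁽²⁾ (product over the tensor legs of Γ⁻¹(x⊗1)). Then ▷ makes B a left H-module algebra. -/
import Mathlib


open TensorProduct LinearMap

noncomputable section

variable (k H B : Type) [Field k]
variable [Ring H] [HopfAlgebra k H] [Ring B] [Algebra k B]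

/-- The lifted action map `H ⊗ B → B`. -/
def actT (act : H →ₗ[k] B →ₗ[k] B) : H ⊗[k] B →ₗ[k] B := TensorProduct.lift act

/-- `(Δ x) ⊗ (a ⊗ b) ↦ (x₍₁₎ ▷ a)(x₍₂₎ ▷ b)`. -/
def maMap (act : H →ₗ[k] B →ₗ[k] B) : (H ⊗[k] H) ⊗[k] (B ⊗[k] B) →ₗ[k] B :=
  (LinearMap.mul' k B) ∘ₗ (TensorProduct.map (actT k H B act) (actT k H B act)) ∘ₗ
    (TensorProduct.tensorTensorTensorComm k H H B B).toLinearMap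

/-- The Galois map `Γ : B ⊗ B → H ⊗ B`, `x ⊗ y ↦ x₍₁₎ ⊗ x₍₂₎ y`. -/
def galoisMap (coact : B →ₗ[k] H ⊗[k] B) : B ⊗[k] B →ₗ[k] H ⊗[k] B :=
  (TensorProduct.map LinearMap.id (LinearMap.mul' k B))
    ∘ₗ (TensorProduct.assoc k H B B).toLinearMap
    ∘ₗ (TensorProduct.map coact LinearMap.id)

/-- `(p ⊗ q) ⊗ a ↦ p a q`. -/
def sandwich : (B ⊗[k] B) ⊗[k] B →ₗ[k] B :=
  (LinearMap.mul' k B)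
    ∘ₗ (TensorProduct.map LinearMap.id (LinearMap.mul' k B))
    ∘ₗ (TensorProduct.map LinearMap.id (TensorProduct.comm k B B).toLinearMap)
    ∘ₗ (TensorProduct.assoc k B B B).toLinearMap

/-- The Miyashita–Ulbrich action `x ▷ a = Γ⁻¹(x ⊗ 1)⁽¹⁾ a Γ⁻¹(x ⊗ 1)⁽²⁾`. -/
def muAct (Γinv : H ⊗[k] B →ₗ[k] B ⊗[k] B) : H →ₗ[k] B →ₗ[k] B :=
  (TensorProduct.curry (sandwich k B)).comp
    (Γinv.comp ((TensorProduct.mk k H B).flip 1))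

/-- `(p ⊗ q) ⊗ (r ⊗ s) ↦ (p r) ⊗ (s q)`. -/
def muPhi : (B ⊗[k] B) ⊗[k] (B ⊗[k] B) →ₗ[k] B ⊗[k] B :=
  (TensorProduct.map (LinearMap.mul' k B)
      ((LinearMap.mul' k B) ∘ₗ (TensorProduct.comm k B B).toLinearMap)) ∘ₗ
    (TensorProduct.tensorTensorTensorComm k B B B B).toLinearMap

lemma muPhi_tmul (p q r s : B) :
    muPhi k B ((p ⊗ₜ[k] q) ⊗ₜ[k] (r ⊗ₜ[k] s)) = (p * r) ⊗ₜ[k] (s * q) := by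
  simp [muPhi]

/-- `θ (p ⊗ q) w = coact p * (w * (1 ⊗ q))`. -/
def muTheta (coact : B →ₗ[k] H ⊗[k] B) :
    (B ⊗[k] B) →ₗ[k] (H ⊗[k] B) →ₗ[k] (H ⊗[k] B) :=
  TensorProduct.curry <|
    (LinearMap.mul' k (H ⊗[k] B))
      ∘ₗ (TensorProduct.map LinearMap.id (LinearMap.mul' k (H ⊗[k] B)))
      ∘ₗ (TensorProduct.map LinearMap.id
            (TensorProduct.comm k (H ⊗[k] B) (H ⊗[k] B)).toLinearMap)
      ∘ₗ (TensorProduct.assoc k (H ⊗[k] B) (H ⊗[k] B) (H ⊗[k] B)).toLinearMap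
      ∘ₗ (TensorProduct.map
            (TensorProduct.map coact ((TensorProduct.mk k H B) 1)) LinearMap.id)

lemma muTheta_tmul (coact : B →ₗ[k] H ⊗[k] B) (p q : B) (w : H ⊗[k] B) :
    muTheta k H B coact (p ⊗ₜ[k] q) w = coact p * (w * ((1 : H) ⊗ₜ[k] q)) := by
  simp [muTheta]

/-- `((p ⊗ q) ⊗ r) ↦ p (a (q (b r)))`. -/
def muP (a b : B) : (B ⊗[k] B) ⊗[k] B →ₗ[k] B :=
  (LinearMap.mul' k B)
    ∘ₗ (TensorProduct.map LinearMap.id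
          (LinearMap.mulLeft k a ∘ₗ (LinearMap.mul' k B)
            ∘ₗ TensorProduct.map LinearMap.id (LinearMap.mulLeft k b)))
    ∘ₗ (TensorProduct.assoc k B B B).toLinearMap

lemma muP_tmul (a b p q r : B) :
    muP k B a b ((p ⊗ₜ[k] q) ⊗ₜ[k] r) = p * (a * (q * (b * r))) := by
  simp [muP]
set_option maxHeartbeats 1000000
set_option synthInstance.maxHeartbeats 400000

section Main

variable {k H B}
variable (coact : B →ₗ[k] H ⊗[k] B) (Γinv : H ⊗[k] B →ₗ[k] B ⊗[k] B)

lemma sandwich_tmul (p q a : B) :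
    sandwich k B ((p ⊗ₜ[k] q) ⊗ₜ[k] a) = p * (a * q) := by
  simp [sandwich]

lemma muAct_def (x : H) (a : B) :
    muAct k H B Γinv x a = sandwich k B (Γinv (x ⊗ₜ[k] 1) ⊗ₜ[k] a) := rfl

lemma assocU (U : H ⊗[k] B) (q : B) :
    (TensorProduct.assoc k H B B) (U ⊗ₜ[k] q)
      = (TensorProduct.map LinearMap.id ((TensorProduct.mk k B B).flip q)) U := by
  induction U using TensorProduct.induction_on with
  | zero => simp
  | tmul h b => simp
  | add U₁ U₂ h1 h2 => simp [add_tmul, h1, h2]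

lemma galois_tmul (p q : B) :
    galoisMap k H B coact (p ⊗ₜ[k] q)
      = (TensorProduct.map LinearMap.id (LinearMap.mulRight k q)) (coact p) := by
  have aux : ∀ U : H ⊗[k] B,
      (TensorProduct.map LinearMap.id (LinearMap.mul' k B))
        ((TensorProduct.assoc k H B B) (U ⊗ₜ[k] q))
        = (TensorProduct.map LinearMap.id (LinearMap.mulRight k q)) U := by
    intro U
    induction U using TensorProduct.induction_on with
    | zero => simp
    | tmul h b => simp
    | add U₁ U₂ h1 h2 => simp [add_tmul, h1, h2]
  simpa [galoisMap] using aux (coact p)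

end Main
section Main2

set_option linter.unusedSectionVars false

variable {k H B}
variable (coact : B →ₗ[k] H ⊗[k] B) (Γinv : H ⊗[k] B →ₗ[k] B ⊗[k] B)

lemma mapmul (U V : H ⊗[k] B) (s q : B) :
    (TensorProduct.map LinearMap.id (LinearMap.mulRight k (s * q))) (U * V)
      = U * ((TensorProduct.map LinearMap.id (LinearMap.mulRight k s)) V)
          * ((1 : H) ⊗ₜ[k] q) := by
  induction U using TensorProduct.induction_on with
  | zero => simp
  | tmul g a =>
    induction V using TensorProduct.induction_on with
    | zero => simp
    | tmul h b => simp [Algebra.TensorProduct.tmul_mul_tmul, mul_assoc]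
    | add V₁ V₂ h1 h2 => simp only [mul_add, add_mul, map_add, h1, h2]
  | add U₁ U₂ h1 h2 => simp only [add_mul, map_add, h1, h2]

lemma aux3 (U : H ⊗[k] B) (y : H) (q : B) :
    U * ((y : H) ⊗ₜ[k] (1 : B)) * ((1 : H) ⊗ₜ[k] q)
      = (TensorProduct.map (LinearMap.mulRight k y) LinearMap.id)
          ((TensorProduct.map LinearMap.id (LinearMap.mulRight k q)) U) := by
  induction U using TensorProduct.induction_on with
  | zero => simp
  | tmul g a => simp [Algebra.TensorProduct.tmul_mul_tmul]
  | add U₁ U₂ h1 h2 => simp only [add_mul, map_add, h1, h2]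

lemma GmulR (z : B ⊗[k] B) (b : B) :
    galoisMap k H B coact ((TensorProduct.map LinearMap.id (LinearMap.mulRight k b)) z)
      = (TensorProduct.map LinearMap.id (LinearMap.mulRight k b)) (galoisMap k H B coact z) := by
  induction z using TensorProduct.induction_on with
  | zero => simp
  | tmul p q =>
    have aux : ∀ U : H ⊗[k] B,
        (TensorProduct.map LinearMap.id (LinearMap.mulRight k (q * b))) U
          = (TensorProduct.map LinearMap.id (LinearMap.mulRight k b))
              ((TensorProduct.map LinearMap.id (LinearMap.mulRight k q)) U) := by
      intro U
      induction U using TensorProduct.induction_on with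
      | zero => simp
      | tmul h c => simp [mul_assoc]
      | add U₁ U₂ h1 h2 => simp only [map_add, h1, h2]
    simp only [TensorProduct.map_tmul, LinearMap.id_coe, id_eq, LinearMap.mulRight_apply]
    rw [galois_tmul, galois_tmul]
    exact aux (coact p)
  | add z₁ z₂ h1 h2 => simp only [map_add, h1, h2]

lemma GinvmulR
    (hΓ₁ : ∀ z : B ⊗[k] B, Γinv (galoisMap k H B coact z) = z)
    (hΓ₂ : ∀ w : H ⊗[k] B, galoisMap k H B coact (Γinv w) = w)
    (w : H ⊗[k] B) (b : B) :
    Γinv ((TensorProduct.map LinearMap.id (LinearMap.mulRight k b)) w)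
      = (TensorProduct.map LinearMap.id (LinearMap.mulRight k b)) (Γinv w) := by
  conv_lhs => rw [← hΓ₂ w]
  rw [← GmulR coact, hΓ₁]

lemma Ginv_tmul
    (hΓ₁ : ∀ z : B ⊗[k] B, Γinv (galoisMap k H B coact z) = z)
    (hΓ₂ : ∀ w : H ⊗[k] B, galoisMap k H B coact (Γinv w) = w)
    (h : H) (b : B) :
    Γinv (h ⊗ₜ[k] b)
      = (TensorProduct.map LinearMap.id (LinearMap.mulRight k b)) (Γinv (h ⊗ₜ[k] 1)) := by
  have e : (h : H) ⊗ₜ[k] b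
      = (TensorProduct.map LinearMap.id (LinearMap.mulRight k b)) (h ⊗ₜ[k] (1 : B)) := by simp
  rw [e, GinvmulR coact Γinv hΓ₁ hΓ₂]

lemma G_coact (b : B) : galoisMap k H B coact (b ⊗ₜ[k] (1 : B)) = coact b := by
  rw [galois_tmul]
  have aux : ∀ U : H ⊗[k] B,
      (TensorProduct.map LinearMap.id (LinearMap.mulRight k (1 : B))) U = U := by
    intro U
    induction U using TensorProduct.induction_on with
    | zero => simp
    | tmul h c => simp
    | add U₁ U₂ h1 h2 => simp only [map_add, h1, h2]
  exact aux (coact b)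

lemma Ginv_coact
    (hΓ₁ : ∀ z : B ⊗[k] B, Γinv (galoisMap k H B coact z) = z)
    (b : B) : Γinv (coact b) = b ⊗ₜ[k] (1 : B) := by
  rw [← G_coact coact, hΓ₁]

end Main2
section Main3

set_option linter.unusedSectionVars false
set_option maxHeartbeats 1000000

variable {k H B}
variable (coact : B →ₗ[k] H ⊗[k] B) (Γinv : H ⊗[k] B →ₗ[k] B ⊗[k] B)

-- ### Statement 1
lemma tau_one
    (coact_one : coact 1 = 1)
    (hΓ₁ : ∀ z : B ⊗[k] B, Γinv (galoisMap k H B coact z) = z) :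
    Γinv ((1 : H) ⊗ₜ[k] (1 : B)) = (1 : B) ⊗ₜ[k] (1 : B) := by
  have e : (1 : H) ⊗ₜ[k] (1 : B) = coact 1 := by
    rw [coact_one, Algebra.TensorProduct.one_def]
  rw [e, Ginv_coact coact Γinv hΓ₁]

-- ### Statement 3
lemma s_one (z : B ⊗[k] B) :
    sandwich k B (z ⊗ₜ[k] (1 : B)) = LinearMap.mul' k B z := by
  induction z using TensorProduct.induction_on with
  | zero => simp
  | tmul p q => rw [sandwich_tmul]; simp
  | add z₁ z₂ h1 h2 => simp only [add_tmul, map_add, h1, h2]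

lemma mulGinv
    (coact_counit : ∀ a : B,
      (TensorProduct.lid k B)
        ((TensorProduct.map (Coalgebra.counit (R := k)) LinearMap.id) (coact a)) = a)
    (hΓ₂ : ∀ w : H ⊗[k] B, galoisMap k H B coact (Γinv w) = w)
    (w : H ⊗[k] B) :
    LinearMap.mul' k B (Γinv w)
      = (TensorProduct.lid k B)
          ((TensorProduct.map (Coalgebra.counit (R := k)) LinearMap.id) w) := by
  have main : ∀ z : B ⊗[k] B,
      LinearMap.mul' k B z
        = (TensorProduct.lid k B)
            ((TensorProduct.map (Coalgebra.counit (R := k)) LinearMap.id)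
              (galoisMap k H B coact z)) := by
    intro z
    induction z using TensorProduct.induction_on with
    | zero => simp
    | tmul p q =>
      rw [galois_tmul]
      have aux : ∀ U : H ⊗[k] B,
          (TensorProduct.lid k B)
            ((TensorProduct.map (Coalgebra.counit (R := k)) LinearMap.id)
              ((TensorProduct.map LinearMap.id (LinearMap.mulRight k q)) U))
            = (TensorProduct.lid k B)
                ((TensorProduct.map (Coalgebra.counit (R := k)) LinearMap.id) U) * q := by
        intro U
        induction U using TensorProduct.induction_on with
        | zero => simp
        | tmul h b => simp [smul_mul_assoc]
        | add U₁ U₂ h1 h2 => simp only [map_add, add_mul, h1, h2]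
      rw [aux (coact p), coact_counit p]
      simp
    | add z₁ z₂ h1 h2 => simp only [map_add, h1, h2]
  rw [main (Γinv w), hΓ₂]

-- ### Statement 2
lemma key2
    (coact_mul : ∀ a b : B, coact (a * b) = coact a * coact b)
    (u v : B ⊗[k] B) :
    galoisMap k H B coact (muPhi k B (u ⊗ₜ[k] v))
      = muTheta k H B coact u (galoisMap k H B coact v) := by
  induction u using TensorProduct.induction_on with
  | zero => simp [zero_tmul]
  | tmul p q =>
    induction v using TensorProduct.induction_on with
    | zero => simp [tmul_zero]
    | tmul r s =>
      rw [muPhi_tmul, galois_tmul, galois_tmul, muTheta_tmul, coact_mul,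
        mapmul, mul_assoc]
    | add v₁ v₂ h1 h2 => simp only [tmul_add, map_add, h1, h2]
  | add u₁ u₂ h1 h2 => simp only [add_tmul, map_add, LinearMap.add_apply, h1, h2]

lemma key2b (u : B ⊗[k] B) (y : H) :
    muTheta k H B coact u (y ⊗ₜ[k] (1 : B))
      = (TensorProduct.map (LinearMap.mulRight k y) LinearMap.id)
          (galoisMap k H B coact u) := by
  induction u using TensorProduct.induction_on with
  | zero => simp
  | tmul p q =>
    rw [muTheta_tmul, galois_tmul]
    rw [← mul_assoc]
    exact aux3 (coact p) y q
  | add u₁ u₂ h1 h2 => simp only [map_add, LinearMap.add_apply, h1, h2]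

lemma tau_mul
    (coact_mul : ∀ a b : B, coact (a * b) = coact a * coact b)
    (hΓ₁ : ∀ z : B ⊗[k] B, Γinv (galoisMap k H B coact z) = z)
    (hΓ₂ : ∀ w : H ⊗[k] B, galoisMap k H B coact (Γinv w) = w)
    (x y : H) :
    Γinv ((x * y) ⊗ₜ[k] (1 : B))
      = muPhi k B (Γinv (x ⊗ₜ[k] 1) ⊗ₜ[k] Γinv (y ⊗ₜ[k] 1)) := by
  have e : galoisMap k H B coact
      (muPhi k B (Γinv (x ⊗ₜ[k] 1) ⊗ₜ[k] Γinv (y ⊗ₜ[k] 1))) = (x * y) ⊗ₜ[k] (1 : B) := by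
    rw [key2 coact coact_mul, hΓ₂, key2b, hΓ₂]
    simp
  rw [← e, hΓ₁]

lemma S2 (u v : B ⊗[k] B) (a : B) :
    sandwich k B (muPhi k B (u ⊗ₜ[k] v) ⊗ₜ[k] a)
      = sandwich k B (u ⊗ₜ[k] sandwich k B (v ⊗ₜ[k] a)) := by
  induction u using TensorProduct.induction_on with
  | zero => simp [zero_tmul]
  | tmul p q =>
    induction v using TensorProduct.induction_on with
    | zero => simp [tmul_zero, zero_tmul]
    | tmul r s =>
      rw [muPhi_tmul, sandwich_tmul, sandwich_tmul, sandwich_tmul]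
      simp [mul_assoc]
    | add v₁ v₂ h1 h2 =>
      simp only [tmul_add, add_tmul, map_add, h1, h2]
  | add u₁ u₂ h1 h2 => simp only [add_tmul, map_add, h1, h2]

end Main3
section Main4

set_option linter.unusedSectionVars false
set_option maxHeartbeats 1000000

variable {k H B}
variable (coact : B →ₗ[k] H ⊗[k] B) (Γinv : H ⊗[k] B →ₗ[k] B ⊗[k] B)

-- naturality of assoc in the third slot
lemma natAssoc (q : B) (W : (H ⊗[k] H) ⊗[k] B) :
    (TensorProduct.map LinearMap.id (TensorProduct.map LinearMap.id (LinearMap.mulRight k q)))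
        ((TensorProduct.assoc k H H B) W)
      = (TensorProduct.assoc k H H B)
          ((TensorProduct.map LinearMap.id (LinearMap.mulRight k q)) W) := by
  induction W using TensorProduct.induction_on with
  | zero => simp
  | tmul uv b =>
    induction uv using TensorProduct.induction_on with
    | zero => simp [zero_tmul]
    | tmul g h => simp
    | add w₁ w₂ h1 h2 => simp only [add_tmul, map_add, h1, h2]
  | add W₁ W₂ h1 h2 => simp only [map_add, h1, h2]

lemma lemB
    (coact_coassoc : ∀ a : B,
      (TensorProduct.map Coalgebra.comul LinearMap.id) (coact a)
        = (TensorProduct.assoc k H H B).symm ((TensorProduct.map LinearMap.id coact) (coact a)))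
    (z : B ⊗[k] B) :
    (TensorProduct.map LinearMap.id (galoisMap k H B coact))
        ((TensorProduct.assoc k H B B) ((TensorProduct.map coact LinearMap.id) z))
      = (TensorProduct.assoc k H H B)
          ((TensorProduct.map (Coalgebra.comul (R := k)) LinearMap.id)
            (galoisMap k H B coact z)) := by
  induction z using TensorProduct.induction_on with
  | zero => simp
  | tmul p q =>
    -- LHS
    have e1 : (TensorProduct.map coact LinearMap.id) (p ⊗ₜ[k] q) = coact p ⊗ₜ[k] q := by simp
    rw [e1, assocU (coact p) q]
    have e2 : ∀ U : H ⊗[k] B,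
        (TensorProduct.map LinearMap.id (galoisMap k H B coact))
            ((TensorProduct.map LinearMap.id ((TensorProduct.mk k B B).flip q)) U)
          = (TensorProduct.map LinearMap.id
              ((TensorProduct.map LinearMap.id (LinearMap.mulRight k q)) ∘ₗ coact)) U := by
      intro U
      induction U using TensorProduct.induction_on with
      | zero => simp
      | tmul h b => simp [galois_tmul]
      | add U₁ U₂ h1 h2 => simp only [map_add, h1, h2]
    rw [e2 (coact p)]
    have e3 : ∀ U : H ⊗[k] B,
        (TensorProduct.map LinearMap.id
            ((TensorProduct.map LinearMap.id (LinearMap.mulRight k q)) ∘ₗ coact)) U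
          = (TensorProduct.map LinearMap.id
              (TensorProduct.map LinearMap.id (LinearMap.mulRight k q)))
              ((TensorProduct.map LinearMap.id coact) U) := by
      intro U
      induction U using TensorProduct.induction_on with
      | zero => simp
      | tmul h b => simp
      | add U₁ U₂ h1 h2 => simp only [map_add, h1, h2]
    rw [e3 (coact p)]
    have e4 : (TensorProduct.map LinearMap.id coact) (coact p)
        = (TensorProduct.assoc k H H B)
            ((TensorProduct.map (Coalgebra.comul (R := k)) LinearMap.id) (coact p)) := by
      rw [coact_coassoc p]
      simp
    rw [e4, natAssoc]
    -- RHS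
    rw [galois_tmul]
    have e5 : ∀ U : H ⊗[k] B,
        (TensorProduct.map (Coalgebra.comul (R := k)) LinearMap.id)
            ((TensorProduct.map LinearMap.id (LinearMap.mulRight k q)) U)
          = (TensorProduct.map LinearMap.id (LinearMap.mulRight k q))
              ((TensorProduct.map (Coalgebra.comul (R := k)) LinearMap.id) U) := by
      intro U
      induction U using TensorProduct.induction_on with
      | zero => simp
      | tmul h b => simp
      | add U₁ U₂ h1 h2 => simp only [map_add, h1, h2]
    rw [e5 (coact p)]
  | add z₁ z₂ h1 h2 => simp only [map_add, h1, h2]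

lemma lemA
    (coact_coassoc : ∀ a : B,
      (TensorProduct.map Coalgebra.comul LinearMap.id) (coact a)
        = (TensorProduct.assoc k H H B).symm ((TensorProduct.map LinearMap.id coact) (coact a)))
    (hΓ₁ : ∀ z : B ⊗[k] B, Γinv (galoisMap k H B coact z) = z)
    (hΓ₂ : ∀ w : H ⊗[k] B, galoisMap k H B coact (Γinv w) = w)
    (x : H) :
    (TensorProduct.assoc k H B B)
        ((TensorProduct.map coact LinearMap.id) (Γinv (x ⊗ₜ[k] 1)))
      = (TensorProduct.map LinearMap.id (Γinv ∘ₗ ((TensorProduct.mk k H B).flip 1)))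
          (Coalgebra.comul (R := k) x) := by
  -- injectivity of `map id galoisMap`
  have hli : ∀ z : H ⊗[k] (B ⊗[k] B),
      (TensorProduct.map LinearMap.id Γinv)
        ((TensorProduct.map LinearMap.id (galoisMap k H B coact)) z) = z := by
    intro z
    rw [← LinearMap.comp_apply, ← TensorProduct.map_comp]
    rw [show Γinv ∘ₗ galoisMap k H B coact = LinearMap.id from LinearMap.ext hΓ₁]
    simp
  apply (Function.LeftInverse.injective hli)
  rw [lemB coact coact_coassoc, hΓ₂]
  -- LHS is now assoc ((map comul id) (x ⊗ₜ 1))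
  have e6 : ∀ W : H ⊗[k] H,
      (TensorProduct.map LinearMap.id (galoisMap k H B coact))
          ((TensorProduct.map LinearMap.id (Γinv ∘ₗ ((TensorProduct.mk k H B).flip 1))) W)
        = (TensorProduct.map LinearMap.id ((TensorProduct.mk k H B).flip 1)) W := by
    intro W
    induction W using TensorProduct.induction_on with
    | zero => simp
    | tmul g h => simp [hΓ₂]
    | add W₁ W₂ h1 h2 => simp only [map_add, h1, h2]
  rw [e6]
  have e7 : ∀ W : H ⊗[k] H,
      (TensorProduct.assoc k H H B) (W ⊗ₜ[k] (1 : B))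
        = (TensorProduct.map LinearMap.id ((TensorProduct.mk k H B).flip 1)) W := by
    intro W
    induction W using TensorProduct.induction_on with
    | zero => simp [zero_tmul]
    | tmul g h => simp
    | add W₁ W₂ h1 h2 => simp only [add_tmul, map_add, h1, h2]
  rw [← e7]
  simp

end Main4
section Main5

set_option linter.unusedSectionVars false
set_option maxHeartbeats 1000000

variable {k H B}
variable (coact : B →ₗ[k] H ⊗[k] B) (Γinv : H ⊗[k] B →ₗ[k] B ⊗[k] B)

lemma lhs4
    (hΓ₁ : ∀ z : B ⊗[k] B, Γinv (galoisMap k H B coact z) = z)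
    (a b : B) (z : B ⊗[k] B) :
    muP k B a b ((TensorProduct.map Γinv LinearMap.id)
        ((TensorProduct.assoc k H B B).symm ((TensorProduct.assoc k H B B)
          ((TensorProduct.map coact LinearMap.id) z))))
      = sandwich k B (z ⊗ₜ[k] (a * b)) := by
  rw [LinearEquiv.symm_apply_apply]
  induction z using TensorProduct.induction_on with
  | zero => simp
  | tmul u w =>
    have e : (TensorProduct.map Γinv LinearMap.id)
        ((TensorProduct.map coact LinearMap.id) (u ⊗ₜ[k] w))
          = (u ⊗ₜ[k] (1 : B)) ⊗ₜ[k] w := by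
      simp [Ginv_coact coact Γinv hΓ₁]
    rw [e, muP_tmul, sandwich_tmul]
    simp [mul_assoc]
  | add z₁ z₂ h1 h2 => simp only [map_add, tmul_add, add_tmul, h1, h2]

lemma core4
    (a b p q : B) (u : B ⊗[k] B) :
    muP k B a b (((TensorProduct.map LinearMap.id (LinearMap.mulRight k p)) u) ⊗ₜ[k] q)
      = sandwich k B (u ⊗ₜ[k] a) * (p * (b * q)) := by
  induction u using TensorProduct.induction_on with
  | zero => simp
  | tmul c d =>
    simp only [TensorProduct.map_tmul, LinearMap.id_coe, id_eq, LinearMap.mulRight_apply]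
    rw [muP_tmul, sandwich_tmul]
    simp [mul_assoc]
  | add u₁ u₂ h1 h2 => simp only [map_add, add_tmul, map_add, mul_add, add_mul, h1, h2]

lemma rhs4
    (hΓ₁ : ∀ z : B ⊗[k] B, Γinv (galoisMap k H B coact z) = z)
    (hΓ₂ : ∀ w : H ⊗[k] B, galoisMap k H B coact (Γinv w) = w)
    (a b : B) (W : H ⊗[k] H) :
    muP k B a b ((TensorProduct.map Γinv LinearMap.id)
        ((TensorProduct.assoc k H B B).symm
          ((TensorProduct.map LinearMap.id (Γinv ∘ₗ ((TensorProduct.mk k H B).flip 1))) W)))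
      = maMap k H B (muAct k H B Γinv) (W ⊗ₜ[k] (a ⊗ₜ[k] b)) := by
  induction W using TensorProduct.induction_on with
  | zero => simp [zero_tmul]
  | tmul g h =>
    have inner : ∀ v : B ⊗[k] B,
        muP k B a b ((TensorProduct.map Γinv LinearMap.id)
            ((TensorProduct.assoc k H B B).symm (g ⊗ₜ[k] v)))
          = sandwich k B (Γinv (g ⊗ₜ[k] 1) ⊗ₜ[k] a) * sandwich k B (v ⊗ₜ[k] b) := by
      intro v
      induction v using TensorProduct.induction_on with
      | zero => simp [tmul_zero]
      | tmul p q =>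
        rw [TensorProduct.assoc_symm_tmul]
        simp only [TensorProduct.map_tmul, LinearMap.id_coe, id_eq]
        rw [Ginv_tmul coact Γinv hΓ₁ hΓ₂ g p, core4, sandwich_tmul]
      | add v₁ v₂ h1 h2 => simp only [tmul_add, map_add, add_tmul, mul_add, h1, h2]
    simp only [TensorProduct.map_tmul, LinearMap.id_coe, id_eq, LinearMap.comp_apply]
    have emk : ((TensorProduct.mk k H B).flip 1) h = h ⊗ₜ[k] (1 : B) := rfl
    rw [emk, inner (Γinv (h ⊗ₜ[k] 1))]
    -- RHS
    have : maMap k H B (muAct k H B Γinv) ((g ⊗ₜ[k] h) ⊗ₜ[k] (a ⊗ₜ[k] b))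
        = muAct k H B Γinv g a * muAct k H B Γinv h b := by
      simp [maMap, actT]
    rw [this, muAct_def, muAct_def]
  | add W₁ W₂ h1 h2 => simp only [add_tmul, map_add, h1, h2]

end Main5

/-- Let `B` be an `H`-Galois extension of the base field `k`:
a left `H`-comodule algebra with coinvariants `k·1` and bijective Galois map
`Γ(x ⊗ y) = x₍₁₎ ⊗ x₍₂₎ y`.  Then the Miyashita–Ulbrich action
`x ▷ a = Γ⁻¹(x ⊗ 1)⁽¹⁾ a Γ⁻¹(x ⊗ 1)⁽²⁾` makes `B` a left `H`-module algebra. -/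
theorem miyashitaUlbrich_module_algebra
    (coact : B →ₗ[k] H ⊗[k] B)
    -- `B` is a left `H`-comodule algebra
    (coact_one : coact 1 = 1)
    (coact_mul : ∀ a b : B, coact (a * b) = coact a * coact b)
    (coact_coassoc : ∀ a : B,
      (TensorProduct.map Coalgebra.comul LinearMap.id) (coact a)
        = (TensorProduct.assoc k H H B).symm ((TensorProduct.map LinearMap.id coact) (coact a)))
    (coact_counit : ∀ a : B,
      (TensorProduct.lid k B)
        ((TensorProduct.map (Coalgebra.counit (R := k)) LinearMap.id) (coact a)) = a)
    -- the coinvariants are the scalars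
    (hcoinv : ∀ b : B, coact b = (1 : H) ⊗ₜ[k] b → ∃ c : k, b = c • (1 : B))
    -- the Galois map is bijective, with inverse `Γinv`
    (Γinv : H ⊗[k] B →ₗ[k] B ⊗[k] B)
    (hΓ₁ : ∀ z : B ⊗[k] B, Γinv (galoisMap k H B coact z) = z)
    (hΓ₂ : ∀ w : H ⊗[k] B, galoisMap k H B coact (Γinv w) = w) :
    -- the Miyashita–Ulbrich action makes `B` a left `H`-module algebra
    (∀ a : B, muAct k H B Γinv 1 a = a) ∧
    (∀ (x y : H) (a : B), muAct k H B Γinv (x * y) a = muAct k H B Γinv x (muAct k H B Γinv y a)) ∧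
    (∀ x : H, muAct k H B Γinv x 1 = Coalgebra.counit (R := k) x • (1 : B)) ∧
    (∀ (x : H) (a b : B), muAct k H B Γinv x (a * b)
        = maMap k H B (muAct k H B Γinv) (Coalgebra.comul x ⊗ₜ[k] (a ⊗ₜ[k] b))) := by
  refine ⟨?_, ?_, ?_, ?_⟩
  · -- unitality
    intro a
    rw [muAct_def, tau_one coact Γinv coact_one hΓ₁, sandwich_tmul]
    simp
  · -- associativity
    intro x y a
    rw [muAct_def, muAct_def, muAct_def,
      tau_mul coact Γinv coact_mul hΓ₁ hΓ₂, S2]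
  · -- acting on 1
    intro x
    rw [muAct_def, s_one, mulGinv coact Γinv coact_counit hΓ₂]
    simp
  · -- module algebra property
    intro x a b
    have e := congrArg (fun z => muP k B a b ((TensorProduct.map Γinv LinearMap.id)
        ((TensorProduct.assoc k H B B).symm z)))
      (lemA coact Γinv coact_coassoc hΓ₁ hΓ₂ x)
    rw [lhs4 coact Γinv hΓ₁, rhs4 coact Γinv hΓ₁ hΓ₂] at e
    rw [muAct_def, ← e]
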